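/- Define the voting rule E₁ by E₁(C, V) = C if |C| = 3 and E₁(C, V) = ∅ otherwise. Let m, k ≥ 1, let U be a finite set with |U| = 3m, and let S_1, …, S_k be 3-element subsets of U. Form the priced instance with districts D_1, …, D_k each having C_i = ∅ and no votes, additional candidate set A = U, price π(i, a) = 1 if a ∈ S_i and π(i, a) = 3m + 1 otherwise, and budget B = 3m. Then this instance is a Yes-instance of E₁-$CRC_3 if and only if there is an index set I ⊆ {1, …, k} with |I| = m such that the sets S_i for i ∈ I are pairwise disjoint and their union is U (i.e., {S_i}_{i∈I} is an exact cover of U by 3-sets). -/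
import Mathlib


open Finset

variable {Cand Prof : Type*}

/-- `assignedTo A g i` is the set `A_i` of additional candidates assigned to district `i`
by the assignment `g : A → {1, …, k}`. -/
def assignedTo [DecidableEq Cand] {k : ℕ} (A : Finset Cand)
    (g : {a // a ∈ A} → Fin k) (i : Fin k) : Finset Cand :=
  (A.attach.filter fun a => g a = i).image Subtype.val

/-- Yes-instance of unbounded constructive recampaigning (`E`-CRC). -/
def YesCRC [DecidableEq Cand] (E : Finset Cand → Prof → Finset Cand) {k : ℕ}
    (C : Fin k → Finset Cand) (V : Fin k → Prof) (A : Finset Cand) : Prop :=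
  ∃ g : {a // a ∈ A} → Fin k,
    ∀ a : {a // a ∈ A}, (a : Cand) ∈ E (C (g a) ∪ assignedTo A g (g a)) (V (g a))

/-- Yes-instance of bounded constructive recampaigning (`E`-CRC_ℓ). -/
def YesCRCB [DecidableEq Cand] (E : Finset Cand → Prof → Finset Cand) (ℓ : ℕ) {k : ℕ}
    (C : Fin k → Finset Cand) (V : Fin k → Prof) (A : Finset Cand) : Prop :=
  ∃ g : {a // a ∈ A} → Fin k,
    (∀ a : {a // a ∈ A}, (a : Cand) ∈ E (C (g a) ∪ assignedTo A g (g a)) (V (g a))) ∧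
    ∀ i : Fin k, (assignedTo A g i).Nonempty →
      (E (C i ∪ assignedTo A g i) (V i)).card ≤ ℓ

/-- Yes-instance of priced unbounded constructive recampaigning (`E`-$CRC). -/
def YesPCRC [DecidableEq Cand] (E : Finset Cand → Prof → Finset Cand) {k : ℕ}
    (C : Fin k → Finset Cand) (V : Fin k → Prof) (A : Finset Cand)
    (π : Fin k → Cand → ℕ+) (B : ℕ) : Prop :=
  ∃ g : {a // a ∈ A} → Fin k,
    (∀ a : {a // a ∈ A}, (a : Cand) ∈ E (C (g a) ∪ assignedTo A g (g a)) (V (g a))) ∧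
    (∑ a ∈ A.attach, (π (g a) a : ℕ)) ≤ B

/-- Yes-instance of priced bounded constructive recampaigning (`E`-$CRC_ℓ). -/
def YesPCRCB [DecidableEq Cand] (E : Finset Cand → Prof → Finset Cand) (ℓ : ℕ) {k : ℕ}
    (C : Fin k → Finset Cand) (V : Fin k → Prof) (A : Finset Cand)
    (π : Fin k → Cand → ℕ+) (B : ℕ) : Prop :=
  ∃ g : {a // a ∈ A} → Fin k,
    (∀ a : {a // a ∈ A}, (a : Cand) ∈ E (C (g a) ∪ assignedTo A g (g a)) (V (g a))) ∧
    (∀ i : Fin k, (assignedTo A g i).Nonempty →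
      (E (C i ∪ assignedTo A g i) (V i)).card ≤ ℓ) ∧
    (∑ a ∈ A.attach, (π (g a) a : ℕ)) ≤ B


lemma mem_assignedTo [DecidableEq Cand] {k : ℕ} {A : Finset Cand}
    {g : {a // a ∈ A} → Fin k} {i : Fin k} {a : Cand} :
    a ∈ assignedTo A g i ↔ ∃ h : a ∈ A, g ⟨a, h⟩ = i := by
  simp [assignedTo]

/-- correctness of the X3C reduction in Proposition 4, (1) ⟹ (2): for the
voting rule `E₁` (electing all candidates if there are exactly 3, and nobody otherwise), the
priced instance with `k` empty districts (no candidates, no votes), additional candidates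
`A = U` where `|U| = 3m`, prices `π (i, a) = 1` if `a ∈ S_i` and `3m + 1` otherwise, and
budget `B = 3m`, is a Yes-instance of `E₁`-$CRC_3 if and only if some `m` of the 3-sets
`S_1, …, S_k` form an exact cover of `U`. -/
theorem e_one_priced_crc_iff_x3c {Cand Vt : Type*} [DecidableEq Cand]
    (m k : ℕ) (hm : 1 ≤ m) (hk : 1 ≤ k)
    (U : Finset Cand) (hU : U.card = 3 * m)
    (S : Fin k → Finset Cand) (hSsub : ∀ i, S i ⊆ U) (hS3 : ∀ i, (S i).card = 3) :
    YesPCRCB (fun (C' : Finset Cand) (_ : List Vt) => if C'.card = 3 then C' else ∅) 3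
        (fun _ : Fin k => (∅ : Finset Cand)) (fun _ : Fin k => ([] : List Vt)) U
        (fun i a => if a ∈ S i then (1 : ℕ+) else (⟨3 * m + 1, Nat.succ_pos _⟩ : ℕ+))
        (3 * m) ↔
      ∃ I : Finset (Fin k), I.card = m ∧
        (∀ i ∈ I, ∀ j ∈ I, i ≠ j → Disjoint (S i) (S j)) ∧
        I.biUnion S = U := by
  constructor
  · rintro ⟨g, hwin, hbound, hbud⟩
    simp only [Finset.empty_union] at hwin
    have hbud' : (∑ a ∈ U.attach,
        (if (↑a : Cand) ∈ S (g a) then 1 else 3 * m + 1)) ≤ 3 * m := by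
      refine le_trans (le_of_eq (Finset.sum_congr rfl fun a _ => ?_)) hbud
      by_cases h : (↑a : Cand) ∈ S (g a) <;> simp [h] <;> rfl
    have h1 : ∀ a ∈ U.attach,
        (1 : ℕ) ≤ (if (↑a : Cand) ∈ S (g a) then 1 else 3 * m + 1) := by
      intro a _
      split <;> omega
    have hsum1 : (∑ _a ∈ U.attach, (1 : ℕ)) = 3 * m := by
      simp [hU]
    have heq : (∑ _a ∈ U.attach, (1 : ℕ)) =
        ∑ a ∈ U.attach, (if (↑a : Cand) ∈ S (g a) then 1 else 3 * m + 1) :=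
      le_antisymm (Finset.sum_le_sum h1) (hbud'.trans hsum1.ge)
    have hall := (Finset.sum_eq_sum_iff_of_le h1).mp heq
    have hmemS : ∀ a : {x // x ∈ U}, (a : Cand) ∈ S (g a) := by
      intro a
      by_contra hne
      have := hall a (Finset.mem_attach _ _)
      rw [if_neg hne] at this
      omega
    have hAcard : ∀ a : {x // x ∈ U}, (assignedTo U g (g a)).card = 3 := by
      intro a
      by_contra h
      have := hwin a
      rw [if_neg h] at this
      exact absurd this (Finset.notMem_empty _)
    have hAsub : ∀ i, assignedTo U g i ⊆ S i := by
      intro i x hx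
      rw [mem_assignedTo] at hx
      obtain ⟨hxU, hgi⟩ := hx
      have := hmemS ⟨x, hxU⟩
      rwa [hgi] at this
    have hAeq : ∀ a : {x // x ∈ U}, assignedTo U g (g a) = S (g a) := fun a =>
      Finset.eq_of_subset_of_card_le (hAsub _) (by rw [hAcard a, hS3])
    have hmemA : ∀ a : {x // x ∈ U}, (a : Cand) ∈ assignedTo U g (g a) := fun a =>
      mem_assignedTo.mpr ⟨a.2, rfl⟩
    set I : Finset (Fin k) :=
      Finset.univ.filter (fun i => (assignedTo U g i).Nonempty) with hI
    have hIeq : ∀ i ∈ I, assignedTo U g i = S i := by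
      intro i hi
      rw [hI, Finset.mem_filter] at hi
      obtain ⟨x, hx⟩ := hi.2
      rw [mem_assignedTo] at hx
      obtain ⟨hxU, hgi⟩ := hx
      rw [← hgi]
      exact hAeq ⟨x, hxU⟩
    have hgI : ∀ a : {x // x ∈ U}, g a ∈ I := fun a =>
      Finset.mem_filter.mpr ⟨Finset.mem_univ _, ⟨a, hmemA a⟩⟩
    have hdisj : ∀ i ∈ I, ∀ j ∈ I, i ≠ j → Disjoint (S i) (S j) := by
      intro i hi j hj hij
      rw [← hIeq i hi, ← hIeq j hj, Finset.disjoint_left]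
      intro x hxi hxj
      rw [mem_assignedTo] at hxi hxj
      obtain ⟨hxU, hgi⟩ := hxi
      obtain ⟨hxU', hgj⟩ := hxj
      exact hij (hgi ▸ hgj ▸ rfl)
    have hcover : I.biUnion S = U := by
      apply Finset.Subset.antisymm
      · intro x hx
        rw [Finset.mem_biUnion] at hx
        obtain ⟨i, _, hxi⟩ := hx
        exact hSsub i hxi
      · intro x hx
        refine Finset.mem_biUnion.mpr ⟨g ⟨x, hx⟩, hgI _, ?_⟩
        have := hmemA ⟨x, hx⟩
        rwa [hAeq] at this
    have hcard : I.card = m := by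
      have hb : (I.biUnion S).card = ∑ i ∈ I, (S i).card :=
        Finset.card_biUnion (fun i hi j hj hij => hdisj i hi j hj hij)
      rw [hcover, hU] at hb
      have hsum : ∑ i ∈ I, (S i).card = 3 * I.card := by
        rw [Finset.sum_congr rfl (fun i _ => hS3 i)]
        simp [Finset.sum_const, Nat.mul_comm]
      rw [hsum] at hb
      omega
    exact ⟨I, hcard, hdisj, hcover⟩
  · rintro ⟨I, hIcard, hdisj, hcover⟩
    have hex : ∀ a : {x // x ∈ U}, ∃ i, i ∈ I ∧ (a : Cand) ∈ S i := by
      rintro ⟨x, hx⟩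
      have hx' : x ∈ I.biUnion S := by rw [hcover]; exact hx
      rw [Finset.mem_biUnion] at hx'
      obtain ⟨i, hi, hxi⟩ := hx'
      exact ⟨i, hi, hxi⟩
    let g : {x // x ∈ U} → Fin k := fun a => (hex a).choose
    have hg1 : ∀ a, g a ∈ I := fun a => (hex a).choose_spec.1
    have hg2 : ∀ a, (a : Cand) ∈ S (g a) := fun a => (hex a).choose_spec.2
    have huniq : ∀ (a : {x // x ∈ U}) (i : Fin k), i ∈ I → (a : Cand) ∈ S i → g a = i := by
      intro a i hi hai
      by_contra hne
      exact (Finset.disjoint_left.mp (hdisj _ (hg1 a) _ hi hne)) (hg2 a) hai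
    have hAeq : ∀ i ∈ I, assignedTo U g i = S i := by
      intro i hi
      ext x
      rw [mem_assignedTo]
      constructor
      · rintro ⟨hxU, rfl⟩
        exact hg2 ⟨x, hxU⟩
      · intro hx
        exact ⟨hSsub i hx, huniq _ i hi hx⟩
    refine ⟨g, ?_, ?_, ?_⟩
    · intro a
      simp only [Finset.empty_union]
      rw [hAeq (g a) (hg1 a), hS3, if_pos rfl]
      exact hg2 a
    · intro i hne
      obtain ⟨x, hx⟩ := hne
      rw [mem_assignedTo] at hx
      obtain ⟨hxU, hgi⟩ := hx
      have hiI : i ∈ I := hgi ▸ hg1 ⟨x, hxU⟩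
      simp only [Finset.empty_union]
      rw [hAeq i hiI, hS3, if_pos rfl, hS3]
    · have hone : (∑ a ∈ U.attach,
          (((fun (i : Fin k) (a : Cand) => if a ∈ S i then (1 : ℕ+)
            else (⟨3 * m + 1, Nat.succ_pos _⟩ : ℕ+)) (g a) (↑a : Cand) : ℕ+) : ℕ)) =
          ∑ _a ∈ U.attach, (1 : ℕ) :=
        Finset.sum_congr rfl fun a _ => by simp [hg2 a]
      rw [hone]
      simp [hU]
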